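/- For every z ∈ ℤ^d with z ≠ 0 there exists R < ∞ (depending on d and z) such that for every r ≥ R and every real x ≥ 0: P(T_{C(z,r)}(0,z) > 9‖z‖x) ≤ 9^{2d} · ‖z‖ · P(Y > x). -/

import Mathlib

open MeasureTheory ProbabilityTheory Filter ENNReal

noncomputable section

namespace FPP

/-- Vertices of the `d`-dimensional integer lattice. -/
abbrev V (d : ℕ) := Fin d → ℤ

/-- ℓ¹-distance on the lattice. -/
def dist1 {d : ℕ} (x y : V d) : ℕ := ∑ i, (x i - y i).natAbs

/-- ℓ¹-norm on the lattice. -/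
def norm1 {d : ℕ} (x : V d) : ℕ := ∑ i, (x i).natAbs

lemma dist1_symm {d : ℕ} (x y : V d) : dist1 x y = dist1 y x :=
  Finset.sum_congr rfl fun i _ => by omega

/-- The set of nearest-neighbour edges of the lattice, as unordered pairs of vertices. -/
def EdgeSet (d : ℕ) : Set (Sym2 (V d)) :=
  Sym2.fromRel (r := fun x y => dist1 x y = 1) ⟨fun _ _ h => by rwa [dist1_symm]⟩

/-- A lattice path: consecutive vertices are at ℓ¹-distance one. -/
def IsLatticePath {d : ℕ} (p : List (V d)) : Prop :=
  p.Chain' fun a b => dist1 a b = 1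

variable {d : ℕ} {Ω : Type*}

/-- The total weight of a path: the sum of the passage times of its edges. -/
def pathWeight (τ : Sym2 (V d) → Ω → ℝ) (ω : Ω) (p : List (V d)) : ℝ :=
  ((p.zip p.tail).map fun q => τ s(q.1, q.2) ω).sum

/-- The travel time between two vertices. -/
def T (τ : Sym2 (V d) → Ω → ℝ) (ω : Ω) (y z : V d) : ℝ :=
  sInf {c | ∃ p : List (V d), IsLatticePath p ∧ p.head? = some y ∧
    p.getLast? = some z ∧ pathWeight τ ω p = c}

/-- The travel time between two vertex sets (infimum over lattice paths from `A` to `B`). -/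
def TSet (τ : Sym2 (V d) → Ω → ℝ) (ω : Ω) (A B : Set (V d)) : ℝ :=
  sInf {c | ∃ p : List (V d), IsLatticePath p ∧ (∃ a ∈ A, p.head? = some a) ∧
    (∃ b ∈ B, p.getLast? = some b) ∧ pathWeight τ ω p = c}

/-- Point-to-set travel time `inf {T(y,z) : z ∈ A}`. -/
def TtoSet (τ : Sym2 (V d) → Ω → ℝ) (ω : Ω) (y : V d) (A : Set (V d)) : ℝ :=
  sInf {c | ∃ z ∈ A, T τ ω y z = c}

/-- The travel time between `A` and `B` restricted to paths all of whose vertices lie in `S`. -/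
def Tres (τ : Sym2 (V d) → Ω → ℝ) (ω : Ω) (S A B : Set (V d)) : ℝ :=
  sInf {c | ∃ p : List (V d), IsLatticePath p ∧ (∀ v ∈ p, v ∈ S) ∧
    (∃ a ∈ A, p.head? = some a) ∧ (∃ b ∈ B, p.getLast? = some b) ∧ pathWeight τ ω p = c}

/-- The standard basis vectors of the lattice. -/
def stdBasis (d : ℕ) (i : Fin d) : V d := fun j => if j = i then 1 else 0

/-- The minimum passage time among the `2d` edges incident to the origin. -/
def Ymin (τ : Sym2 (V d) → Ω → ℝ) (ω : Ω) : ℝ :=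
  sInf {x | ∃ i : Fin d, x = τ s(0, stdBasis d i) ω ∨ x = τ s(0, -stdBasis d i) ω}

/-- The passage times are measurable, nonnegative, independent and identically distributed. -/
def IID [MeasurableSpace Ω] (τ : Sym2 (V d) → Ω → ℝ) (P : Measure Ω) : Prop :=
  (∀ e, Measurable (τ e)) ∧ (∀ e ω, 0 ≤ τ e ω) ∧
    iIndepFun (fun e : EdgeSet d => τ e.1) P ∧
    ∀ e e' : EdgeSet d, IdentDistrib (τ e.1) (τ e'.1) P P

/-- `μZ` is the time constant: it is nonnegative and `T(0,nz)/n → μZ z` in probability. -/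
def IsTimeConstant [MeasurableSpace Ω] (τ : Sym2 (V d) → Ω → ℝ) (P : Measure Ω)
    (μZ : V d → ℝ) : Prop :=
  (∀ z, 0 ≤ μZ z) ∧
    ∀ z : V d, TendstoInMeasure P (fun (n : ℕ) ω => T τ ω 0 (n • z) / n) atTop fun _ => μZ z

/-- `E[Y^α]`, as a Lebesgue integral with values in `[0,∞]`. -/
def momY [MeasurableSpace Ω] (τ : Sym2 (V d) → Ω → ℝ) (P : Measure Ω) (α : ℝ) : ℝ≥0∞ :=
  ∫⁻ ω, ENNReal.ofReal (Ymin τ ω ^ α) ∂P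

/-- Embedding of the lattice into Euclidean space. -/
def toE {d : ℕ} (x : V d) : EuclideanSpace ℝ (Fin d) := WithLp.toLp 2 (fun i => (x i : ℝ))

/-- The cylinder of Euclidean radius `r` around the line `ℝz`. -/
def cyl (z : V d) (r : ℝ) : Set (V d) :=
  {y | Metric.infDist (toE y) (Set.range fun a : ℝ => a • toE z) ≤ r}

/-- The hyperplane of vertices with coordinate sum `k`. -/
def Hplane (d : ℕ) (k : ℤ) : Set (V d) := {y | ∑ i, y i = k}

/-- The section `V_n(z,r)` of the cylinder. -/
def Vsec (z : V d) (r : ℝ) (n : ℕ) : Set (V d) := cyl z r ∩ Hplane d (n * norm1 z)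

/-- The set of edges `E_n(z,r)` joining `C(z,r) ∩ H_{n‖z‖-1}` to `C(z,r) ∩ H_{n‖z‖}`. -/
def Esec (z : V d) (r : ℝ) (n : ℕ) : Set (Sym2 (V d)) :=
  {e | ∃ a b : V d, e = s(a, b) ∧ dist1 a b = 1 ∧ a ∈ cyl z r ∧ b ∈ cyl z r ∧
    (∑ i, a i) = (n * norm1 z : ℕ) - 1 ∧ (∑ i, b i) = (n * norm1 z : ℕ)}

/-- The event `A_n(z,r)`: all edges of `E_n(z,r)` have passage time at most `tbar`. -/
def Asec (τ : Sym2 (V d) → Ω → ℝ) (z : V d) (r tbar : ℝ) (n : ℕ) (ω : Ω) : Prop :=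
  ∀ e ∈ Esec z r n, τ e ω ≤ tbar

/-- The regeneration times `ρ_j(z,r)`. -/
def rho (τ : Sym2 (V d) → Ω → ℝ) (z : V d) (r tbar : ℝ) (ω : Ω) : ℕ → ℕ
  | 0 => 0
  | j + 1 => sInf {n : ℕ | rho τ z r tbar ω j < n ∧ Asec τ z r tbar n ω}

/-- The cylinder time constant `μ_{C(z,r)} = lim E[T_{C(z,r)}(V_0,V_n)]/n`, in `[0,∞]`. -/
def muCyl [MeasurableSpace Ω] (τ : Sym2 (V d) → Ω → ℝ) (P : Measure Ω) (z : V d) (r : ℝ) :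
    ℝ≥0∞ :=
  atTop.liminf fun n : ℕ =>
    (∫⁻ ω, ENNReal.ofReal (Tres τ ω (cyl z r) (Vsec z r 0) (Vsec z r n)) ∂P) / n

/-- The set `Z_ε` of sites experiencing a linear order deviation. -/
def Zset (τ : Sym2 (V d) → Ω → ℝ) (μZ : V d → ℝ) (ε : ℝ) (ω : Ω) : Set (V d) :=
  {z | ε * norm1 z < |T τ ω 0 z - μZ z|}

/-- The ball `B_t` of sites reached from the origin by time `t`. -/
def Bt (τ : Sym2 (V d) → Ω → ℝ) (ω : Ω) (t : ℝ) : Set (V d) := {z | T τ ω 0 z ≤ t}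

/-- The discrete ball `B^μ_t` of the time constant. -/
def Bmu (μZ : V d → ℝ) (t : ℝ) : Set (V d) := {z | μZ z ≤ t}

/-- The set `T_ε` of times at which one of the shape theorem inclusions fails. -/
def TEps (τ : Sym2 (V d) → Ω → ℝ) (μZ : V d → ℝ) (ε : ℝ) (ω : Ω) : Set ℝ :=
  {t | 0 ≤ t ∧ (¬ Bmu μZ ((1 - ε) * t) ⊆ Bt τ ω t ∨ ¬ Bt τ ω t ⊆ Bmu μZ ((1 + ε) * t))}

end FPP

/-!
Walk from `0` to `z` in `‖z‖` unit steps. Around a step `u → u + ε` there are `2d` pairwise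
edge-disjoint lattice paths of at most `9` edges within `ℓ¹`-distance `4` of `u`, hence inside
`C(z, r)` once `r ≥ ‖z‖ + 4`: the edge itself, the squares `u, u + η, u + η + ε, u + ε` for
`η ⊥ ε`, and a nine-edge loop starting with `-ε`. If `T_{C(z,r)}(0, z) > 9‖z‖x`, then at some
step each of these `2d` paths has an edge with passage time `> x`. Picking one such edge on each
path (at most `9^{2d}` choices), independence bounds the probability of this by
`9^{2d} P(τ > x)^{2d} ≤ 9^{2d} P(Y > x)`, and a union bound over the `‖z‖` steps concludes.
-/

namespace FPP

variable {d : ℕ}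

section Lattice

lemma norm1_neg (x : V d) : norm1 (-x) = norm1 x := by
  simp [norm1]

lemma norm1_add_le (x y : V d) : norm1 (x + y) ≤ norm1 x + norm1 y := by
  rw [norm1, norm1, norm1, ← Finset.sum_add_distrib]
  exact Finset.sum_le_sum fun i _ => Int.natAbs_add_le (x i) (y i)

lemma norm1_smul (c : ℤ) (x : V d) : norm1 (c • x) = c.natAbs * norm1 x := by
  simp [norm1, Finset.mul_sum, Int.natAbs_mul]

lemma eq_zero_of_norm1_eq_zero {x : V d} (h : norm1 x = 0) : x = 0 :=
  funext fun i => Int.natAbs_eq_zero.mp (Finset.sum_eq_zero_iff.mp h i (Finset.mem_univ i))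

/-- `±eᵢ`, the sign being a unit of `ℤ`. -/
def unitVec (p : Fin d × ℤˣ) : V d := Pi.single p.1 (p.2 : ℤ)

lemma norm1_unitVec (p : Fin d × ℤˣ) : norm1 (unitVec p) = 1 := by
  rw [norm1, Finset.sum_eq_single p.1 (fun i _ hi => by simp [unitVec, hi]) (by simp)]
  simp [unitVec]

lemma neg_unitVec (i : Fin d) (s : ℤˣ) : -unitVec (i, s) = unitVec (i, -s) := by
  simp [unitVec, Pi.single_neg]

lemma unitVec_injective : Function.Injective (unitVec : Fin d × ℤˣ → V d) := by
  rintro ⟨i, s⟩ ⟨i', s'⟩ h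
  have hi : i = i' := by
    by_contra hne
    simpa [unitVec, hne] using congrFun h i
  subst hi
  exact Prod.ext rfl (Units.ext (by simpa [unitVec] using h))

lemma unitVec_apply_self_ne_zero (p : Fin d × ℤˣ) : unitVec p p.1 ≠ 0 := by
  simp [unitVec]

lemma unitVec_apply_eq_zero {p q : Fin d × ℤˣ} (h : unitVec q ≠ unitVec p)
    (h' : unitVec q ≠ -unitVec p) : unitVec q p.1 = 0 := by
  obtain ⟨i, s⟩ := p
  obtain ⟨j, t⟩ := q
  have hij : j ≠ i := by
    rintro rfl
    rcases Int.units_eq_one_or s with rfl | rfl <;>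
      rcases Int.units_eq_one_or t with rfl | rfl <;> simp_all [neg_unitVec]
  simp [unitVec, Ne.symm hij]

lemma stdBasis_eq_unitVec (i : Fin d) : stdBasis d i = unitVec (i, 1) := by
  funext j
  simp [stdBasis, unitVec, Pi.single_apply]

lemma exists_norm1_sub_unitVec {z : V d} (hz : z ≠ 0) :
    ∃ p, norm1 (z - unitVec p) + 1 = norm1 z := by
  obtain ⟨j, hj⟩ : ∃ j, z j ≠ 0 := by
    by_contra! h
    exact hz (funext h)
  set s : ℤˣ := if 0 < z j then 1 else -1 with hs
  refine ⟨(j, s), ?_⟩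
  have hj' : (z j - s).natAbs + 1 = (z j).natAbs := by
    rw [hs]; split_ifs <;> push_cast <;> omega
  have hrest : ∀ i ∈ Finset.univ.erase j, ((z - unitVec (j, s)) i).natAbs = (z i).natAbs :=
    fun i hi => by simp [unitVec, Finset.ne_of_mem_erase hi]
  rw [norm1, norm1, ← Finset.add_sum_erase _ _ (Finset.mem_univ j),
    ← Finset.add_sum_erase _ _ (Finset.mem_univ j), ← hj', Finset.sum_congr rfl hrest]
  simp only [Pi.sub_apply, unitVec, Pi.single_eq_same]
  omega

lemma exists_unitVec_walk (z : V d) :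
    ∃ v : ℕ → V d, v 0 = 0 ∧ v (norm1 z) = z ∧ (∀ k, norm1 (v k) ≤ norm1 z) ∧
      ∀ k < norm1 z, ∃ p, v (k + 1) = v k + unitVec p := by
  generalize hn : norm1 z = n
  induction n generalizing z with
  | zero =>
    exact ⟨fun _ => 0, rfl, (eq_zero_of_norm1_eq_zero hn).symm, fun _ => by simp [norm1],
      fun _ hk => absurd hk (Nat.not_lt_zero _)⟩
  | succ n ih =>
    obtain ⟨p, hp⟩ := exists_norm1_sub_unitVec (z := z) (by rintro rfl; simp [norm1] at hn)
    obtain ⟨v, hv0, hvn, hvle, hvstep⟩ := ih (z - unitVec p) (by omega)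
    refine ⟨fun k => if k ≤ n then v k else z, by simp [hv0], by simp, fun k => ?_,
      fun k hk => ?_⟩
    · dsimp only
      split_ifs
      · exact (hvle k).trans n.le_succ
      · exact hn.le
    · rcases Nat.lt_succ_iff_lt_or_eq.mp hk with hk | rfl
      · simpa [hk, hk.le, Nat.succ_le_of_lt hk] using hvstep k hk
      · exact ⟨p, by simp [hvn]⟩

end Lattice

section Paths

def edgesOf {α : Type*} (p : List α) : List (Sym2 α) := (p.zip p.tail).map fun q => s(q.1, q.2)

lemma edgesOf_cons_cons {α : Type*} (a b : α) (l : List α) :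
    edgesOf (a :: b :: l) = s(a, b) :: edgesOf (b :: l) := rfl

lemma edgesOf_map {α β : Type*} (f : α → β) (p : List α) :
    edgesOf (p.map f) = (edgesOf p).map (Sym2.map f) := by
  simp [edgesOf, ← List.map_tail, List.zip_map, Function.comp_def]

lemma length_edgesOf {α : Type*} (p : List α) : (edgesOf p).length = p.length - 1 := by
  simp [edgesOf]

lemma edgesOf_append_cons {α : Type*} (p : List α) (b : α) (q : List α) :
    edgesOf (p ++ b :: q) = edgesOf (p ++ [b]) ++ edgesOf (b :: q) := by
  induction p with
  | nil => rfl
  | cons a p ih =>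
    cases p with
    | nil => rfl
    | cons a' p => simp only [List.cons_append, edgesOf_cons_cons] at ih ⊢; rw [ih]

lemma mem_EdgeSet_of_mem_edgesOf {p : List (V d)} (hp : IsLatticePath p) {e : Sym2 (V d)}
    (he : e ∈ edgesOf p) : e ∈ EdgeSet d := by
  induction p using List.twoStepInduction with
  | nil | singleton => simp [edgesOf] at he
  | cons_cons a b l _ ih =>
    rw [IsLatticePath, List.Chain', List.isChain_cons_cons] at hp
    rw [edgesOf_cons_cons, List.mem_cons] at he
    rcases he with rfl | he
    · exact Sym2.fromRel_prop.mpr hp.1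
    · exact ih b hp.2 he

def IsPathIn (S : Set (V d)) (a b : V d) (p : List (V d)) : Prop :=
  IsLatticePath p ∧ (∀ w ∈ p, w ∈ S) ∧ p.head? = some a ∧ p.getLast? = some b

variable {Ω : Type*} {τ : Sym2 (V d) → Ω → ℝ} {ω : Ω} {S : Set (V d)} {a b : V d}
  {p q : List (V d)}

lemma pathWeight_eq_sum_edgesOf :
    pathWeight τ ω p = ((edgesOf p).map fun e => τ e ω).sum := by
  simp [pathWeight, edgesOf, Function.comp_def]

lemma pathWeight_le_of_forall_le {x : ℝ} {N : ℕ} (hx : 0 ≤ x) (hN : (edgesOf p).length ≤ N)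
    (h : ∀ e ∈ edgesOf p, τ e ω ≤ x) :
    pathWeight τ ω p ≤ N * x := by
  rw [pathWeight_eq_sum_edgesOf]
  calc ((edgesOf p).map fun e => τ e ω).sum ≤ (edgesOf p).length • x :=
        List.sum_le_card_nsmul _ _ (by simpa using h) |>.trans_eq (by simp)
    _ ≤ N * x := by rw [nsmul_eq_mul]; gcongr

lemma IsPathIn.mono {S' : Set (V d)} (hp : IsPathIn S a b p) (hS : S ⊆ S') : IsPathIn S' a b p :=
  ⟨hp.1, fun w hw => hS (hp.2.1 w hw), hp.2.2⟩

lemma isPathIn_singleton (ha : a ∈ S) : IsPathIn S a a [a] :=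
  ⟨List.isChain_singleton a, by simpa using ha, rfl, rfl⟩

lemma IsPathIn.append {c : V d} (hp : IsPathIn S a b p) (hq : IsPathIn S b c q) :
    IsPathIn S a c (p ++ q.tail) := by
  obtain ⟨hpl, hpS, hpa, hpb⟩ := hp
  obtain ⟨hql, hqS, hqb, hqc⟩ := hq
  obtain ⟨p, rfl⟩ := List.getLast?_eq_some_iff.mp hpb
  obtain ⟨q, rfl⟩ := List.head?_eq_some_iff.mp hqb
  rw [List.tail_cons, List.append_assoc, List.singleton_append]
  refine ⟨List.isChain_split.mpr ⟨hpl, hql⟩, fun w hw => ?_, ?_, ?_⟩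
  · rcases List.mem_append.mp hw with hw | hw
    · exact hpS w (List.mem_append_left _ hw)
    · exact hqS w hw
  · cases p <;> simpa using hpa
  · simpa [List.getLast?_append] using hqc

lemma pathWeight_append_tail (hp : p.getLast? = some b) (hq : q.head? = some b) :
    pathWeight τ ω (p ++ q.tail) = pathWeight τ ω p + pathWeight τ ω q := by
  obtain ⟨p, rfl⟩ := List.getLast?_eq_some_iff.mp hp
  obtain ⟨q, rfl⟩ := List.head?_eq_some_iff.mp hq
  rw [List.tail_cons, List.append_assoc, List.singleton_append, pathWeight_eq_sum_edgesOf,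
    edgesOf_append_cons, List.map_append, List.sum_append, ← pathWeight_eq_sum_edgesOf,
    ← pathWeight_eq_sum_edgesOf]

lemma Tres_le_pathWeight (hτ : ∀ e, 0 ≤ τ e ω) {A B : Set (V d)} (hp : IsPathIn S a b p)
    (ha : a ∈ A) (hb : b ∈ B) : Tres τ ω S A B ≤ pathWeight τ ω p := by
  refine csInf_le ⟨0, ?_⟩ ⟨p, hp.1, hp.2.1, ⟨a, ha, hp.2.2.1⟩, ⟨b, hb, hp.2.2.2⟩, rfl⟩
  rintro _ ⟨q, -, -, -, -, rfl⟩
  rw [pathWeight_eq_sum_edgesOf]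
  exact List.sum_nonneg (by simpa using fun e _ => hτ e)

lemma Tres_le_of_chain (hτ : ∀ e, 0 ≤ τ e ω) {A B : Set (V d)} {v : ℕ → V d} {m : ℕ} {c : ℝ}
    (hS : v 0 ∈ S) (hA : v 0 ∈ A) (hB : v m ∈ B)
    (h : ∀ k < m, ∃ p, IsPathIn S (v k) (v (k + 1)) p ∧ pathWeight τ ω p ≤ c) :
    Tres τ ω S A B ≤ m * c := by
  suffices ∀ n ≤ m, ∃ p, IsPathIn S (v 0) (v n) p ∧ pathWeight τ ω p ≤ n * c by
    obtain ⟨p, hp, hpc⟩ := this m le_rfl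
    exact (Tres_le_pathWeight hτ hp hA hB).trans hpc
  intro n hn
  induction n with
  | zero => exact ⟨[v 0], isPathIn_singleton hS, by simp [pathWeight]⟩
  | succ n ih =>
    obtain ⟨p, hp, hpc⟩ := ih (by omega)
    obtain ⟨q, hq, hqc⟩ := h n (by omega)
    refine ⟨p ++ q.tail, hp.append hq, ?_⟩
    rw [pathWeight_append_tail hp.2.2.2 hq.2.2.1]
    push_cast
    linarith

end Paths

section Detours

def planePath (u ε δ : V d) (L : List (ℤ × ℤ)) : List (V d) :=
  L.map fun c => u + c.1 • ε + c.2 • δ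

def IsPlanarDetour (L : List (ℤ × ℤ)) : Prop :=
  L.IsChain (fun c c' => (c.1 - c'.1).natAbs + (c.2 - c'.2).natAbs = 1) ∧
    L.head? = some (0, 0) ∧ L.getLast? = some (1, 0) ∧ L.length ≤ 10 ∧
    ∀ c ∈ L, c.1.natAbs ≤ 2 ∧ c.2.natAbs ≤ 2

lemma IsPlanarDetour.isPathIn {L : List (ℤ × ℤ)} (hL : IsPlanarDetour L) (u : V d)
    {ε δ : V d} (hε : norm1 ε = 1) (hδ : norm1 δ = 1) :
    IsPathIn {w | norm1 w ≤ norm1 u + 4} u (u + ε) (planePath u ε δ L) ∧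
      (edgesOf (planePath u ε δ L)).length ≤ 9 := by
  obtain ⟨hchain, hhead, hlast, hlen, hbox⟩ := hL
  refine ⟨⟨?_, ?_, by simp [planePath, hhead], by simp [planePath, hlast]⟩, ?_⟩
  · refine (List.isChain_map _).mpr (hchain.imp fun c c' h => ?_)
    have hsub : u + c.1 • ε + c.2 • δ - (u + c'.1 • ε + c'.2 • δ) =
        (c.1 - c'.1) • ε + (c.2 - c'.2) • δ := by module
    change norm1 (_ - _) = 1
    rw [hsub]
    rcases (by omega : (c.1 - c'.1 = 0 ∧ (c.2 - c'.2).natAbs = 1) ∨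
        ((c.1 - c'.1).natAbs = 1 ∧ c.2 - c'.2 = 0)) with ⟨h1, h2⟩ | ⟨h1, h2⟩
    · rw [h1, zero_smul, zero_add, norm1_smul, h2, hδ]
    · rw [h2, zero_smul, add_zero, norm1_smul, h1, hε]
  · simp only [planePath, List.mem_map, Set.mem_ofPred_eq, forall_exists_index, and_imp]
    rintro _ c hc rfl
    have h1 := norm1_add_le (u + c.1 • ε) (c.2 • δ)
    have h2 := norm1_add_le u (c.1 • ε)
    rw [norm1_smul, hδ] at h1
    rw [norm1_smul, hε] at h2
    have := hbox c hc
    omega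
  · rw [length_edgesOf, planePath, List.length_map]
    omega

def edgeSum {M : Type*} [AddCommMagma M] : Sym2 M → M := Sym2.lift ⟨(· + ·), add_comm⟩

def edgeSums (L : List (ℤ × ℤ)) : List (ℤ × ℤ) := (edgesOf L).map edgeSum

/-- A common edge of `planePath u ε δ L` and `planePath u ε δ' L'` has one midpoint, whose plane
coordinates then agree in the first entry and up to sign in the second. -/
def AreSeparated (L L' : List (ℤ × ℤ)) : Prop :=
  ∀ c ∈ edgeSums L, ∀ c' ∈ edgeSums L', c.1 = c'.1 → c.2.natAbs ≠ c'.2.natAbs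

instance : DecidableRel AreSeparated := fun L L' => by
  unfold AreSeparated; infer_instance

lemma exists_edgeSums_of_mem_edgesOf {u ε δ δ' : V d} {j : Fin d} (hε : ε j ≠ 0)
    (hδ : δ j = 0) (hδ' : δ' j = 0) {L L' : List (ℤ × ℤ)} {e : Sym2 (V d)}
    (he : e ∈ edgesOf (planePath u ε δ L)) (he' : e ∈ edgesOf (planePath u ε δ' L')) :
    ∃ c ∈ edgeSums L, ∃ c' ∈ edgeSums L', c.1 = c'.1 ∧ c.2 • δ = c'.2 • δ' := by
  have key : ∀ {δ : V d} {L : List (ℤ × ℤ)}, e ∈ edgesOf (planePath u ε δ L) →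
      ∃ c ∈ edgeSums L, edgeSum e = (2 : ℤ) • u + c.1 • ε + c.2 • δ := by
    intro δ L he
    rw [planePath, edgesOf_map, List.mem_map] at he
    obtain ⟨⟨⟨a₁, a₂⟩, ⟨b₁, b₂⟩⟩, hmem, rfl⟩ := he
    refine ⟨_, List.mem_map_of_mem hmem, ?_⟩
    simp only [edgeSum, Sym2.map_mk, Sym2.lift_mk, Prod.mk_add_mk]
    module
  obtain ⟨c, hc, hce⟩ := key he
  obtain ⟨c', hc', hce'⟩ := key he'
  have hsum : c.1 • ε + c.2 • δ = c'.1 • ε + c'.2 • δ' := by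
    have h := hce.symm.trans hce'
    rw [add_assoc, add_assoc] at h
    exact add_left_cancel h
  have hc1 : c.1 = c'.1 := by
    have := congrFun hsum j
    simp only [Pi.add_apply, Pi.smul_apply, smul_eq_mul, hδ, hδ', mul_zero, add_zero] at this
    exact mul_right_cancel₀ hε this
  refine ⟨c, hc, c', hc', hc1, ?_⟩
  rw [hc1] at hsum
  exact add_left_cancel hsum

lemma AreSeparated.disjoint {L L' : List (ℤ × ℤ)} (hLL' : AreSeparated L L') {u ε δ δ' : V d}
    {j : Fin d} (hε : ε j ≠ 0) (hδ : δ j = 0) (hδ' : δ' j = 0) (h1 : norm1 δ = 1)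
    (h1' : norm1 δ' = 1) :
    (edgesOf (planePath u ε δ L)).Disjoint (edgesOf (planePath u ε δ' L')) := by
  intro e he he'
  obtain ⟨c, hc, c', hc', hc1, hc2⟩ := exists_edgeSums_of_mem_edgesOf hε hδ hδ' he he'
  have := congrArg norm1 hc2
  rw [norm1_smul, norm1_smul, h1, h1', mul_one, mul_one] at this
  exact hLL' c hc c' hc' hc1 this

def straightPath : List (ℤ × ℤ) := [(0, 0), (1, 0)]

def sideDetour : List (ℤ × ℤ) := [(0, 0), (0, 1), (1, 1), (1, 0)]

-- It keeps distance `2` from the `ε`-axis so as to miss the square `sideDetour` on its side.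
def backDetour : List (ℤ × ℤ) :=
  [(0, 0), (-1, 0), (-1, 1), (-1, 2), (0, 2), (1, 2), (2, 2), (2, 1), (2, 0), (1, 0)]

lemma isPlanarDetour_straightPath : IsPlanarDetour straightPath := by
  unfold IsPlanarDetour; decide

lemma isPlanarDetour_sideDetour : IsPlanarDetour sideDetour := by
  unfold IsPlanarDetour; decide

lemma isPlanarDetour_backDetour : IsPlanarDetour backDetour := by
  unfold IsPlanarDetour; decide

lemma eq_of_mem_edgesOf_sideDetour {u ε δ δ' : V d} {j : Fin d} (hε : ε j ≠ 0)
    (hδ : δ j = 0) (hδ' : δ' j = 0) {e : Sym2 (V d)}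
    (he : e ∈ edgesOf (planePath u ε δ sideDetour))
    (he' : e ∈ edgesOf (planePath u ε δ' sideDetour)) : δ = δ' := by
  obtain ⟨c, hc, c', hc', hc1, hc2⟩ := exists_edgeSums_of_mem_edgesOf hε hδ hδ' he he'
  have hside : ∀ c ∈ edgeSums sideDetour, ∀ c' ∈ edgeSums sideDetour, c.1 = c'.1 →
      c = c' ∧ c.2 ≠ 0 := by decide
  obtain ⟨rfl, hc0⟩ := hside c hc c' hc' hc1
  exact smul_right_injective (V d) hc0 hc2

def detour (u ε δ₀ η : V d) : List (V d) :=
  if η = ε then planePath u ε δ₀ straightPath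
  else if η = -ε then planePath u ε δ₀ backDetour
  else planePath u ε η sideDetour

lemma isPathIn_detour (u : V d) {ε δ₀ η : V d} (hε : norm1 ε = 1) (hδ₀ : norm1 δ₀ = 1)
    (hη : norm1 η = 1) :
    IsPathIn {w | norm1 w ≤ norm1 u + 4} u (u + ε) (detour u ε δ₀ η) ∧
      (edgesOf (detour u ε δ₀ η)).length ≤ 9 := by
  unfold detour
  split_ifs
  · exact isPlanarDetour_straightPath.isPathIn u hε hδ₀
  · exact isPlanarDetour_backDetour.isPathIn u hε hδ₀
  · exact isPlanarDetour_sideDetour.isPathIn u hε hη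

lemma disjoint_edgesOf_detour (u : V d) {p r : Fin d × ℤˣ} (hr : r.1 ≠ p.1)
    {q q' : Fin d × ℤˣ} (hne : q ≠ q') :
    (edgesOf (detour u (unitVec p) (unitVec r) (unitVec q))).Disjoint
      (edgesOf (detour u (unitVec p) (unitVec r) (unitVec q'))) := by
  have hne' := unitVec_injective.ne hne
  have hε := unitVec_apply_self_ne_zero p
  have hδ₀ : unitVec r p.1 = 0 := by simp [unitVec, hr.symm]
  have hsep {L L' : List (ℤ × ℤ)} {s s' : Fin d × ℤˣ} (hLL' : AreSeparated L L')
      (hs : unitVec s p.1 = 0) (hs' : unitVec s' p.1 = 0) :=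
    hLL'.disjoint (u := u) hε hs hs' (norm1_unitVec s) (norm1_unitVec s')
  -- Two paths of the same shape share an edge only if `q = q'` (for two squares this is
  -- `eq_of_mem_edgesOf_sideDetour`); paths of different shapes are told apart by midpoints.
  unfold detour
  split_ifs <;> first
    | exact absurd (‹unitVec q = unitVec p›.trans ‹unitVec q' = unitVec p›.symm) hne'
    | exact absurd (‹unitVec q = -unitVec p›.trans ‹unitVec q' = -unitVec p›.symm) hne'
    | exact hsep (by decide) hδ₀ hδ₀
    | exact hsep (by decide) (unitVec_apply_eq_zero ‹_› ‹_›) hδ₀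
    | exact hsep (by decide) hδ₀ (unitVec_apply_eq_zero ‹_› ‹_›)
    | exact fun e he he' => hne' (eq_of_mem_edgesOf_sideDetour hε
        (unitVec_apply_eq_zero ‹_› ‹_›) (unitVec_apply_eq_zero ‹_› ‹_›) he he')

lemma exists_detours (hd : 2 ≤ d) (u : V d) (p : Fin d × ℤˣ) :
    ∃ F : Fin d × ℤˣ → List (V d),
      (∀ q, IsPathIn {w | norm1 w ≤ norm1 u + 4} u (u + unitVec p) (F q) ∧
        (edgesOf (F q)).length ≤ 9) ∧
      Pairwise fun q q' => (edgesOf (F q)).Disjoint (edgesOf (F q')) := by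
  have : Nontrivial (Fin d) := Fin.nontrivial_iff_two_le.mpr hd
  obtain ⟨i₀, hi₀⟩ := exists_ne p.1
  exact ⟨fun q => detour u (unitVec p) (unitVec (i₀, 1)) (unitVec q),
    fun q => isPathIn_detour u (norm1_unitVec p) (norm1_unitVec _) (norm1_unitVec q),
    fun q q' hne => disjoint_edgesOf_detour u (r := (i₀, 1)) hi₀ hne⟩

end Detours

end FPP

section IdentDistrib

variable {Ω ι κ : Type*} [MeasurableSpace Ω] {P : Measure Ω} {X : ι → Ω → ℝ}

lemma measure_iInter_lt_eq_pow [Fintype κ] (hX : iIndepFun X P)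
    (hXid : ∀ i j, IdentDistrib (X i) (X j) P P) (i₀ : ι) {g : κ → ι} (hg : g.Injective)
    (x : ℝ) :
    P (⋂ k, {ω | x < X (g k) ω}) = P {ω | x < X i₀ ω} ^ Fintype.card κ := by
  have h := (hX.precomp hg).measure_inter_preimage_eq_mul Finset.univ
    (sets := fun _ => Set.Ioi x) fun _ _ => measurableSet_Ioi
  simp only [Finset.mem_univ, Set.iInter_true] at h
  calc P (⋂ k, {ω | x < X (g k) ω}) = ∏ k, P (X (g k) ⁻¹' Set.Ioi x) := h
    _ = ∏ _k : κ, P {ω | x < X i₀ ω} :=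
      Finset.prod_congr rfl fun k _ => (hXid (g k) i₀).measure_mem_eq measurableSet_Ioi
    _ = P {ω | x < X i₀ ω} ^ Fintype.card κ := Finset.prod_const _

/-- Union bound over the choices of one exceedance in each of the disjoint sets `S k`. -/
lemma measure_forall_exists_lt_le [Fintype κ] (hX : iIndepFun X P)
    (hXid : ∀ i j, IdentDistrib (X i) (X j) P P) (i₀ : ι) {S : κ → Finset ι}
    (hS : Pairwise fun k k' => Disjoint (S k) (S k')) {N : ℕ} (hN : ∀ k, (S k).card ≤ N)
    (x : ℝ) :
    P {ω | ∀ k, ∃ i ∈ S k, x < X i ω} ≤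
      N ^ Fintype.card κ * P {ω | x < X i₀ ω} ^ Fintype.card κ := by
  classical
  have hsub : {ω | ∀ k, ∃ i ∈ S k, x < X i ω} ⊆
      ⋃ f ∈ Fintype.piFinset S, ⋂ k, {ω | x < X (f k) ω} := by
    intro ω hω
    choose f hfS hf using hω
    exact Set.mem_biUnion (Fintype.mem_piFinset.mpr hfS) (Set.mem_iInter.mpr hf)
  have hinj : ∀ f ∈ Fintype.piFinset S, f.Injective := fun f hf k k' hkk' => by
    by_contra hne
    have hf := Fintype.mem_piFinset.mp hf
    exact Finset.disjoint_left.mp (hS hne) (hf k) (hkk' ▸ hf k')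
  have hcard : (Fintype.piFinset S).card ≤ N ^ Fintype.card κ := by
    rw [Fintype.card_piFinset]
    exact Finset.prod_le_pow_card _ _ _ fun k _ => hN k
  calc P {ω | ∀ k, ∃ i ∈ S k, x < X i ω}
      ≤ ∑ f ∈ Fintype.piFinset S, P (⋂ k, {ω | x < X (f k) ω}) :=
        (measure_mono hsub).trans (measure_biUnion_finset_le _ _)
    _ = (Fintype.piFinset S).card * P {ω | x < X i₀ ω} ^ Fintype.card κ := by
        rw [Finset.sum_congr rfl fun f hf => measure_iInter_lt_eq_pow hX hXid i₀ (hinj f hf) x,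
          Finset.sum_const, nsmul_eq_mul]
    _ ≤ N ^ Fintype.card κ * P {ω | x < X i₀ ω} ^ Fintype.card κ := by
        gcongr
        exact_mod_cast hcard

end IdentDistrib

namespace FPP

variable {d : ℕ}

lemma norm_toE_le_norm1 (w : V d) : ‖toE w‖ ≤ norm1 w := by
  have hsq := Finset.sum_sq_le_sq_sum_of_nonneg (s := Finset.univ)
    fun i _ => norm_nonneg ((toE w).ofLp i)
  rw [EuclideanSpace.norm_eq]
  refine (Real.sqrt_le_sqrt hsq).trans_eq ?_
  rw [Real.sqrt_sq (Finset.sum_nonneg fun i _ => norm_nonneg _), norm1, Nat.cast_sum]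
  simp [toE, Nat.cast_natAbs]

lemma mem_cyl_of_norm1_le {z w : V d} {r : ℝ} (h : (norm1 w : ℝ) ≤ r) : w ∈ cyl z r :=
  calc Metric.infDist (toE w) (Set.range fun a : ℝ => a • toE z)
      ≤ dist (toE w) ((0 : ℝ) • toE z) := Metric.infDist_le_dist_of_mem ⟨0, rfl⟩
    _ = ‖toE w‖ := by rw [zero_smul, dist_zero_right]
    _ ≤ r := (norm_toE_le_norm1 w).trans h

lemma mem_EdgeSet_unitVec (a : V d) (p : Fin d × ℤˣ) : s(a, a + unitVec p) ∈ EdgeSet d := by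
  refine Sym2.fromRel_prop.mpr ?_
  change norm1 (a - (a + unitVec p)) = 1
  rw [sub_add_cancel_left, norm1_neg, norm1_unitVec]

variable {Ω : Type*} {τ : Sym2 (V d) → Ω → ℝ}

lemma lt_Ymin_of_forall (hd : 0 < d) {ω : Ω} {x : ℝ}
    (h : ∀ p : Fin d × ℤˣ, x < τ s(0, unitVec p) ω) : x < Ymin τ ω := by
  have hsub : {y | ∃ i, y = τ s(0, stdBasis d i) ω ∨ y = τ s(0, -stdBasis d i) ω} ⊆
      Set.range fun p => τ s(0, unitVec p) ω := by
    rintro _ ⟨i, rfl | rfl⟩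
    · exact ⟨(i, 1), by rw [stdBasis_eq_unitVec]⟩
    · exact ⟨(i, -1), by rw [stdBasis_eq_unitVec, neg_unitVec]⟩
  rw [Ymin, Set.Finite.lt_csInf_iff ((Set.finite_range _).subset hsub)
    ⟨_, ⟨⟨0, hd⟩, Or.inl rfl⟩⟩]
  intro y hy
  obtain ⟨p, rfl⟩ := hsub hy
  exact h p

variable [MeasurableSpace Ω] {P : Measure Ω}

lemma pow_le_measure_lt_Ymin (hτ : IID τ P) (hd : 0 < d) (e₀ : EdgeSet d) (x : ℝ) :
    P {ω | x < τ e₀ ω} ^ (2 * d) ≤ P {ω | x < Ymin τ ω} := by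
  let g : Fin d × ℤˣ → EdgeSet d := fun p => ⟨s(0, unitVec p), by
    simpa using mem_EdgeSet_unitVec 0 p⟩
  have hg : g.Injective := fun p p' h =>
    unitVec_injective (Sym2.congr_right.mp (congrArg Subtype.val h))
  calc P {ω | x < τ e₀ ω} ^ (2 * d) = P (⋂ p, {ω | x < τ (g p) ω}) := by
        rw [measure_iInter_lt_eq_pow (X := fun e : EdgeSet d => τ e.1) hτ.2.2.1 hτ.2.2.2 e₀ hg,
          Fintype.card_prod, Fintype.card_fin, Fintype.card_units_int, mul_comm]
    _ ≤ P {ω | x < Ymin τ ω} := measure_mono fun ω hω => lt_Ymin_of_forall hd (Set.mem_iInter.mp hω)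

lemma measure_forall_exists_edge_lt_le (hτ : IID τ P) {ι : Type*} [Fintype ι]
    {G : ι → List (V d)} (hG : ∀ i, IsLatticePath (G i))
    (hGdisj : Pairwise fun i j => (edgesOf (G i)).Disjoint (edgesOf (G j))) {N : ℕ}
    (hN : ∀ i, (edgesOf (G i)).length ≤ N) (e₀ : EdgeSet d) (x : ℝ) :
    P {ω | ∀ i, ∃ e ∈ edgesOf (G i), x < τ e ω} ≤
      N ^ Fintype.card ι * P {ω | x < τ e₀ ω} ^ Fintype.card ι := by
  classical
  let S i : Finset (EdgeSet d) := (edgesOf (G i)).toFinset.subtype (· ∈ EdgeSet d)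
  have hevent : {ω | ∀ i, ∃ e ∈ edgesOf (G i), x < τ e ω} =
      {ω | ∀ i, ∃ e ∈ S i, x < τ e.1 ω} := by
    ext ω
    simp only [Set.mem_ofPred_eq, S, Finset.mem_subtype, List.mem_toFinset, Subtype.exists]
    exact forall_congr' fun i => ⟨fun ⟨e, he, h⟩ => ⟨e, mem_EdgeSet_of_mem_edgesOf (hG i) he,
      he, h⟩, fun ⟨e, _, he, h⟩ => ⟨e, he, h⟩⟩
  rw [hevent]
  refine measure_forall_exists_lt_le (X := fun e : EdgeSet d => τ e.1) hτ.2.2.1 hτ.2.2.2 e₀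
    (fun i j hij => Finset.disjoint_left.mpr fun e hi hj => ?_) (fun i => ?_) x
  · exact hGdisj hij (List.mem_toFinset.mp (Finset.mem_subtype.mp hi))
      (List.mem_toFinset.mp (Finset.mem_subtype.mp hj))
  · rw [Finset.card_subtype]
    exact (Finset.card_filter_le _ _).trans ((List.toFinset_card_le _).trans (hN i))

/-- If `Tres > N m x`, then at some step `k` every path `F k i` has an edge with passage time
above `x`. -/
lemma measure_lt_Tres_le (hτ : IID τ P) {ι : Type*} [Fintype ι] {S A B : Set (V d)}
    {v : ℕ → V d} {m N : ℕ} {F : ℕ → ι → List (V d)} (hS : v 0 ∈ S) (hA : v 0 ∈ A)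
    (hB : v m ∈ B)
    (hF : ∀ k < m, ∀ i, IsPathIn S (v k) (v (k + 1)) (F k i) ∧ (edgesOf (F k i)).length ≤ N)
    (hFdisj : ∀ k < m, Pairwise fun i i' => (edgesOf (F k i)).Disjoint (edgesOf (F k i')))
    (e₀ : EdgeSet d) {x : ℝ} (hx : 0 ≤ x) :
    P {ω | N * m * x < Tres τ ω S A B} ≤
      m * (N ^ Fintype.card ι * P {ω | x < τ e₀ ω} ^ Fintype.card ι) := by
  have hsub : {ω | N * m * x < Tres τ ω S A B} ⊆
      ⋃ k ∈ Finset.range m, {ω | ∀ i, ∃ e ∈ edgesOf (F k i), x < τ e ω} := by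
    intro ω hω
    by_contra hnot
    have hstep : ∀ k < m, ∃ i, ∀ e ∈ edgesOf (F k i), τ e ω ≤ x := fun k hk => by
      by_contra! h
      exact hnot (Set.mem_biUnion (Finset.mem_range.mpr hk) h)
    have hle : Tres τ ω S A B ≤ N * m * x := by
      rw [mul_comm (N : ℝ), mul_assoc]
      refine Tres_le_of_chain (hτ.2.1 · ω) hS hA hB fun k hk => ?_
      obtain ⟨i, hi⟩ := hstep k hk
      exact ⟨F k i, (hF k hk i).1, pathWeight_le_of_forall_le hx (hF k hk i).2 hi⟩
    exact (not_lt.mpr hle) hω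
  calc P {ω | N * m * x < Tres τ ω S A B}
      ≤ ∑ k ∈ Finset.range m, P {ω | ∀ i, ∃ e ∈ edgesOf (F k i), x < τ e ω} :=
        (measure_mono hsub).trans (measure_biUnion_finset_le _ _)
    _ ≤ ∑ _k ∈ Finset.range m, N ^ Fintype.card ι * P {ω | x < τ e₀ ω} ^ Fintype.card ι :=
        Finset.sum_le_sum fun k hk => by
          have hk := Finset.mem_range.mp hk
          exact measure_forall_exists_edge_lt_le hτ (fun i => (hF k hk i).1.1) (hFdisj k hk)
            (fun i => (hF k hk i).2) e₀ x
    _ = m * (N ^ Fintype.card ι * P {ω | x < τ e₀ ω} ^ Fintype.card ι) := by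
        rw [Finset.sum_const, Finset.card_range, nsmul_eq_mul]

end FPP

open FPP in
theorem fpp_cylinder_tail_general {d : ℕ} (hd : 2 ≤ d) {Ω : Type*} [MeasurableSpace Ω]
    (P : Measure Ω)
    (τ : Sym2 (V d) → Ω → ℝ) (hτ : IID τ P)
    (z : V d) :
    ∃ R : ℝ, ∀ r : ℝ, R ≤ r → ∀ x : ℝ, 0 ≤ x →
      P {ω | 9 * (norm1 z : ℝ) * x < Tres τ ω (cyl z r) {0} {z}} ≤
        (9 : ℝ≥0∞) ^ (2 * d) * (norm1 z : ℝ≥0∞) * P {ω | x < Ymin τ ω} := by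
  have hd0 : 0 < d := by omega
  have : Nonempty (Fin d) := ⟨⟨0, hd0⟩⟩
  obtain ⟨v, hv0, hvz, hv_norm, hv_step⟩ := exists_unitVec_walk z
  choose! step hstep using hv_step
  choose F hF hF_disj using fun k => exists_detours hd (v k) (step k)
  let e₀ : EdgeSet d := ⟨_, mem_EdgeSet_unitVec 0 (⟨0, hd0⟩, 1)⟩
  refine ⟨norm1 z + 4, fun r hr x hx => ?_⟩
  have hball : {w : V d | norm1 w ≤ norm1 z + 4} ⊆ cyl z r := fun w hw =>
    mem_cyl_of_norm1_le ((Nat.cast_le.mpr hw).trans (by push_cast; exact hr))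
  have hpaths : ∀ k < norm1 z, ∀ q, IsPathIn (cyl z r) (v k) (v (k + 1)) (F k q) ∧
      (edgesOf (F k q)).length ≤ 9 := fun k hk q => by
    rw [hstep k hk]
    refine ⟨(hF k q).1.mono fun w hw => hball ?_, (hF k q).2⟩
    exact (show norm1 w ≤ norm1 (v k) + 4 from hw).trans (by have := hv_norm k; omega)
  have key := measure_lt_Tres_le hτ (A := {0}) (B := {z})
    (by rw [hv0]; exact hball (by simp [norm1])) hv0 hvz hpaths (fun k _ => hF_disj k) e₀ hx
  rw [Fintype.card_prod, Fintype.card_fin, Fintype.card_units_int, mul_comm d] at key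
  push_cast at key
  calc P {ω | 9 * (norm1 z : ℝ) * x < Tres τ ω (cyl z r) {0} {z}}
      ≤ 9 ^ (2 * d) * (norm1 z : ℝ≥0∞) * P {ω | x < τ e₀ ω} ^ (2 * d) := by
        refine key.trans_eq ?_; ring
    _ ≤ 9 ^ (2 * d) * (norm1 z : ℝ≥0∞) * P {ω | x < Ymin τ ω} := by
        gcongr
        exact pow_le_measure_lt_Ymin hτ hd0 e₀ x

open FPP in
/-- **Lemma (tail comparison in cylinders).** For `z ≠ 0` and `r` large enough,
`P(T_{C(z,r)}(0,z) > 9‖z‖x) ≤ 9^{2d} ‖z‖ P(Y > x)` for every `x ≥ 0`. -/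
theorem fpp_cylinder_tail {d : ℕ} (hd : 2 ≤ d) {Ω : Type*} [MeasurableSpace Ω]
    (P : Measure Ω) [IsProbabilityMeasure P]
    (τ : Sym2 (V d) → Ω → ℝ) (hτ : IID τ P)
    (z : V d) (hz : z ≠ 0) :
    ∃ R : ℝ, ∀ r : ℝ, R ≤ r → ∀ x : ℝ, 0 ≤ x →
      P {ω | 9 * (norm1 z : ℝ) * x < Tres τ ω (cyl z r) {0} {z}} ≤
        (9 : ℝ≥0∞) ^ (2 * d) * (norm1 z : ℝ≥0∞) * P {ω | x < Ymin τ ω} :=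
  fpp_cylinder_tail_general hd P τ hτ z
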